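/- Let η = (K1, K2, K3, K4, κ3, κ6, κ9, κ12) be a tuple of positive real parameters with a(η) ≥ 0. Then p_η(x1,x2,x3) ≥ 0 for all x1 > 0, x2 > 0, x3 > 0 if and only if p_{η,H}(x1,x3) ≥ 0 for all x1 > 0, x3 > 0. -/

import Mathlib

/-!
Substituting `x1 = s * y`, `x2 = s` turns `p_η` into `s ^ 4 * (p_{η,H}(y, x3) + s * q(y, x3))`,
where `q = pEtaOffH` collects the monomials off the face `H` and has nonnegative coefficients
when `a(η) ≥ 0`. Letting `s → 0⁺` shows that `p_{η,H} ≥ 0` is necessary, and `q ≥ 0` shows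
that it is sufficient.
-/

/-- The trivariate polynomial `p_η` governing monostationarity of dual phosphorylation. -/
def pEta (K1 K2 K3 K4 κ3 κ6 κ9 κ12 x1 x2 x3 : ℝ) : ℝ :=
  K2 * κ3 * (κ3 * κ12 - κ6 * κ9) *
      (K2 * K4 * κ3 * κ9 * x1 ^ 4 * x3 ^ 2
        + K1 * K3 * κ6 * κ12 *
            (x1 ^ 3 * x2 ^ 2 * x3 + x1 ^ 2 * x2 ^ 3 * x3 + x1 ^ 2 * x2 ^ 2 * x3 ^ 2)
        + K2 * K3 * κ3 * κ12 * x1 ^ 3 * x2 * x3 ^ 2)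
    + K1 * K2 * K3 * κ3 * κ6 * κ12 * ((K2 + K3) * κ3 * κ12 - (K1 + K4) * κ6 * κ9)
        * x1 ^ 2 * x2 ^ 2 * x3
    + K1 * κ6 *
        (K2 ^ 2 * K4 * κ3 ^ 2 * κ9 ^ 2 * x1 ^ 4 * x3
          + 2 * K2 * K3 * K4 * κ3 ^ 2 * κ9 * κ12 * x1 ^ 3 * x2 * x3
          + K1 * K2 * K3 * κ3 * κ6 * κ12 * (κ9 + κ12) * x1 ^ 2 * x2 ^ 3
          + K1 * K2 * K3 * K4 * κ3 * κ6 * κ9 * κ12 * x1 ^ 2 * x2 ^ 2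
          + K1 * K3 ^ 2 * κ6 * κ12 ^ 2 * (κ3 + κ6) * x1 * x2 ^ 4
          + 2 * K1 * K2 * K3 * κ3 * κ6 * κ12 ^ 2 * x1 * x2 ^ 3 * x3
          + K1 * K2 * K3 ^ 2 * κ3 * κ6 * κ12 ^ 2 * x1 * x2 ^ 3
          + K1 * K3 ^ 2 * κ6 ^ 2 * κ12 ^ 2 * x2 ^ 4 * x3
          + K1 ^ 2 * K3 ^ 2 * κ6 ^ 2 * κ12 ^ 2 * x2 ^ 4)

/-- The bivariate polynomial `p_{η,H}` supported on the hexagonal face `H`. -/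
def pEtaH (K1 K2 K3 K4 κ3 κ6 κ9 κ12 x1 x3 : ℝ) : ℝ :=
  K2 * κ3 * (κ3 * κ12 - κ6 * κ9) *
      (K2 * K4 * κ3 * κ9 * x1 ^ 4 * x3 ^ 2 + K1 * K3 * κ6 * κ12 * x1 ^ 2 * x3 ^ 2
        + K2 * K3 * κ3 * κ12 * x1 ^ 3 * x3 ^ 2)
    + K1 * K2 * K3 * κ3 * κ6 * κ12 * ((K2 + K3) * κ3 * κ12 - (K1 + K4) * κ6 * κ9)
        * x1 ^ 2 * x3
    + K1 * κ6 *
        (K2 ^ 2 * K4 * κ3 ^ 2 * κ9 ^ 2 * x1 ^ 4 * x3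
          + 2 * K2 * K3 * K4 * κ3 ^ 2 * κ9 * κ12 * x1 ^ 3 * x3
          + K1 * K2 * K3 * K4 * κ3 * κ6 * κ9 * κ12 * x1 ^ 2
          + 2 * K1 * K2 * K3 * κ3 * κ6 * κ12 ^ 2 * x1 * x3
          + K1 * K2 * K3 ^ 2 * κ3 * κ6 * κ12 ^ 2 * x1
          + K1 * K3 ^ 2 * κ6 ^ 2 * κ12 ^ 2 * x3
          + K1 ^ 2 * K3 ^ 2 * κ6 ^ 2 * κ12 ^ 2)

open Filter Topology

lemma nonneg_of_forall_pos_add_mul_nonneg {A C : ℝ} (h : ∀ t : ℝ, 0 < t → 0 ≤ A + t * C) :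
    0 ≤ A := by
  have hlim : Tendsto (fun t : ℝ => A + t * C) (𝓝[>] 0) (𝓝 A) := by
    have hcont : Continuous fun t : ℝ => A + t * C := by fun_prop
    simpa using (hcont.tendsto 0).mono_left nhdsWithin_le_nhds
  exact ge_of_tendsto hlim (eventually_nhdsWithin_of_forall h)

def pEtaOffH (K1 K2 K3 κ3 κ6 κ9 κ12 y x3 : ℝ) : ℝ :=
  K2 * κ3 * (κ3 * κ12 - κ6 * κ9) * (K1 * K3 * κ6 * κ12) * (y ^ 3 * x3 + y ^ 2 * x3)
    + K1 * κ6 * (K1 * K2 * K3 * κ3 * κ6 * κ12 * (κ9 + κ12) * y ^ 2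
      + K1 * K3 ^ 2 * κ6 * κ12 ^ 2 * (κ3 + κ6) * y)

lemma pEta_mul_eq (K1 K2 K3 K4 κ3 κ6 κ9 κ12 s y x3 : ℝ) :
    pEta K1 K2 K3 K4 κ3 κ6 κ9 κ12 (s * y) s x3 =
      s ^ 4 * (pEtaH K1 K2 K3 K4 κ3 κ6 κ9 κ12 y x3
        + s * pEtaOffH K1 K2 K3 κ3 κ6 κ9 κ12 y x3) := by
  simp only [pEta, pEtaH, pEtaOffH]
  ring

lemma pEtaOffH_nonneg {K1 K2 K3 κ3 κ6 κ9 κ12 y x3 : ℝ}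
    (hK1 : 0 < K1) (hK2 : 0 < K2) (hK3 : 0 < K3)
    (hκ3 : 0 < κ3) (hκ6 : 0 < κ6) (hκ9 : 0 < κ9) (hκ12 : 0 < κ12)
    (ha : 0 ≤ κ3 * κ12 - κ6 * κ9) (hy : 0 ≤ y) (hx3 : 0 ≤ x3) :
    0 ≤ pEtaOffH K1 K2 K3 κ3 κ6 κ9 κ12 y x3 := by
  unfold pEtaOffH
  have hcoeff : 0 ≤ K2 * κ3 * (κ3 * κ12 - κ6 * κ9) := by positivity
  positivity

theorem pEta_nonneg_iff_pEtaH_nonneg_general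
    (K1 K2 K3 K4 κ3 κ6 κ9 κ12 : ℝ)
    (hK1 : 0 < K1) (hK2 : 0 < K2) (hK3 : 0 < K3)
    (hκ3 : 0 < κ3) (hκ6 : 0 < κ6) (hκ9 : 0 < κ9) (hκ12 : 0 < κ12)
    (ha : 0 ≤ κ3 * κ12 - κ6 * κ9) :
    (∀ x1 x2 x3 : ℝ, 0 < x1 → 0 < x2 → 0 < x3 →
        0 ≤ pEta K1 K2 K3 K4 κ3 κ6 κ9 κ12 x1 x2 x3) ↔
      (∀ x1 x3 : ℝ, 0 < x1 → 0 < x3 →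
        0 ≤ pEtaH K1 K2 K3 K4 κ3 κ6 κ9 κ12 x1 x3) := by
  constructor
  · intro hp x1 x3 hx1 hx3
    refine nonneg_of_forall_pos_add_mul_nonneg
      (C := pEtaOffH K1 K2 K3 κ3 κ6 κ9 κ12 x1 x3) fun t ht => ?_
    have hpt := hp (t * x1) t x3 (by positivity) ht hx3
    rw [pEta_mul_eq] at hpt
    exact nonneg_of_mul_nonneg_right hpt (by positivity)
  · intro hpH x1 x2 x3 hx1 hx2 hx3
    have hy : 0 < x1 / x2 := div_pos hx1 hx2
    rw [← mul_div_cancel₀ x1 hx2.ne', pEta_mul_eq]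
    have hoff := pEtaOffH_nonneg hK1 hK2 hK3 hκ3 hκ6 hκ9 hκ12 ha hy.le hx3.le
    have hface := hpH _ x3 hy hx3
    positivity

/-- For `a(η) ≥ 0`, the trivariate polynomial `p_η` is nonnegative on the
positive orthant if and only if its restriction `p_{η,H}` to the hexagonal face is. -/
theorem pEta_nonneg_iff_pEtaH_nonneg
    (K1 K2 K3 K4 κ3 κ6 κ9 κ12 : ℝ)
    (hK1 : 0 < K1) (hK2 : 0 < K2) (hK3 : 0 < K3) (hK4 : 0 < K4)
    (hκ3 : 0 < κ3) (hκ6 : 0 < κ6) (hκ9 : 0 < κ9) (hκ12 : 0 < κ12)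
    (ha : 0 ≤ κ3 * κ12 - κ6 * κ9) :
    (∀ x1 x2 x3 : ℝ, 0 < x1 → 0 < x2 → 0 < x3 →
        0 ≤ pEta K1 K2 K3 K4 κ3 κ6 κ9 κ12 x1 x2 x3) ↔
      (∀ x1 x3 : ℝ, 0 < x1 → 0 < x3 →
        0 ≤ pEtaH K1 K2 K3 K4 κ3 κ6 κ9 κ12 x1 x3) :=
  pEta_nonneg_iff_pEtaH_nonneg_general K1 K2 K3 K4 κ3 κ6 κ9 κ12 hK1 hK2 hK3 hκ3 hκ6 hκ9 hκ12 ha
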